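/- Let a > c and d > b (coordination game) and let δ satisfy 0 < δ < (d−b)/(a+d−b−c). Let φ : ℝ → ℝ be continuously differentiable with φ(x) < 0 for all x ∈ [0,δ), φ(x) > 0 for all x ∈ (δ,1], and such that there exists ε* > 0 with φ(x) > a − c for all x ∈ [1−ε*, 1]. Then every solution (x, g) of the conformity-gain controlled replicator equation with x(0) ∈ [0,1) and g(0) > 0 satisfies x(t) → 0 and g(t) → 0 as t → ∞. -/

import Mathlib

/-!
Each of `x`, `1 - x` and `g` solves a linear equation `ḟ = k(t) f` with continuous `k`, so none of
them changes sign. The heart of the proof is that `x` must fall below the interior equilibrium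
`x* = (d - b) / (a + d - b - c)`. Otherwise `φ(x) ≥ m > 0` makes `log g` grow linearly, and so
does `Z = log (g (1 - x))`: where `x < 1 - ε` one has `Z ≥ log g + log ε`, and where `x ≥ 1 - ε`
the bound `φ(x) > a - c ≥ x ((a + d - b - c) x + b - d)` makes `Ż` positive. Since
`d/dt log (1 - x) ≥ -(a - c) + x* g (1 - x)`, a large `g (1 - x)` then drives `log (1 - x)` above
`0`, which is absurd. Once below `x*`, `x` stays below some `v < x*`, where its per-capita growth
rate is at most `(1 - v) ((a + d - b - c) v + b - d) < 0`, so `x → 0` exponentially; then `φ(x)` is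
eventually bounded by a negative constant and `g → 0` exponentially as well.
-/

open Set Filter Topology Real

/-- `(x, g)` is a solution of the conformity-gain controlled replicator equation
(control matrix `G⁽⁴⁾`): `ẋ = x(1−x)((a+d−b−c)x + b − d − g(1−x))`, `ġ = φ(x) g`. -/
def IsConformitySolution (a b c d : ℝ) (φ : ℝ → ℝ) (x g : ℝ → ℝ) : Prop :=
  ∀ t : ℝ, 0 ≤ t →
    HasDerivAt x
      (x t * (1 - x t) * ((a + d - b - c) * x t + (b - d) - g t * (1 - x t))) t ∧
    HasDerivAt g (φ (x t) * g t) t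

section LinearODE

variable {f f' k : ℝ → ℝ} {T : ℝ}

theorem mul_sub_le_sub_of_le_hasDerivAt {C : ℝ} (hf : ∀ t ∈ Ici T, HasDerivAt f (f' t) t)
    (hC : ∀ t ∈ Ici T, C ≤ f' t) {t : ℝ} (ht : T ≤ t) : C * (t - T) ≤ f t - f T := by
  have hline : ∀ s, HasDerivAt (fun s => f T + C * (s - T)) C s := fun s => by
    simpa using (((hasDerivAt_id s).sub_const T).const_mul C).const_add (f T)
  have := image_le_of_deriv_right_le_deriv_boundary
    (fun s _ => (hline s).continuousAt.continuousWithinAt) (fun s _ => (hline s).hasDerivWithinAt)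
    (B := f) (by simp)
    (fun s hs => (hf s hs.1).continuousAt.continuousWithinAt)
    (fun s hs => (hf s hs.1).hasDerivWithinAt) (fun s hs => hC s hs.1) ⟨ht, le_rfl⟩
  linarith

theorem exists_eq_mul_exp_of_hasDerivAt_mul (hk : ContinuousOn k (Ici T))
    (hf : ∀ t ∈ Ici T, HasDerivAt f (k t * f t) t) :
    ∃ Φ : ℝ → ℝ, (∀ t ∈ Ici T, HasDerivAt Φ (k t) t) ∧ ∀ t ∈ Ici T, f t = f T * exp (Φ t) := by
  -- extending `k` by `k T` to the left makes `∫ s in T..t, k s` differentiable at `t = T` too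
  have hk' : Continuous fun s => k (max s T) :=
    hk.comp_continuous (continuous_id.max continuous_const) fun s => le_max_right s T
  obtain ⟨Φ, hΦT, hΦ⟩ : ∃ Φ : ℝ → ℝ, Φ T = 0 ∧ ∀ t ∈ Ici T, HasDerivAt Φ (k t) t :=
    ⟨fun t => ∫ s in T..t, k (max s T), intervalIntegral.integral_same, fun t ht => by
      simpa [max_eq_left (mem_Ici.1 ht)] using (hk'.integral_hasStrictDerivAt T t).hasDerivAt⟩
  refine ⟨Φ, hΦ, fun t ht => ?_⟩
  have hderiv : ∀ s ∈ Ici T, HasDerivAt (fun s => f s * exp (-Φ s)) 0 s := fun s hs => by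
    have hexp : HasDerivAt (fun s => exp (-Φ s)) (exp (-Φ s) * -k s) s := (hΦ s hs).neg.exp
    exact ((hf s hs).mul hexp).congr_deriv (by ring)
  have hconst := constant_of_has_deriv_right_zero
    (fun s hs => (hderiv s hs.1).continuousAt.continuousWithinAt)
    (fun s hs => (hderiv s hs.1).hasDerivWithinAt) t ⟨ht, le_rfl⟩
  rw [hΦT, neg_zero, exp_zero, mul_one] at hconst
  rw [← hconst, mul_assoc, ← exp_add, neg_add_cancel, exp_zero, mul_one]

theorem tendsto_zero_of_hasDerivAt_mul_of_le_neg {η : ℝ} (hη : 0 < η)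
    (hk : ContinuousOn k (Ici T)) (hf : ∀ t ∈ Ici T, HasDerivAt f (k t * f t) t)
    (hkη : ∀ t ∈ Ici T, k t ≤ -η) : Tendsto f atTop (𝓝 0) := by
  obtain ⟨Φ, hΦ, hf_eq⟩ := exists_eq_mul_exp_of_hasDerivAt_mul hk hf
  have hΦ_le : ∀ t ∈ Ici T, Φ t ≤ Φ T + η * T + -η * t := fun t ht => by
    have := mul_sub_le_sub_of_le_hasDerivAt (f := fun s => -Φ s) (fun s hs => (hΦ s hs).neg)
      (fun s hs => le_neg_of_le_neg (hkη s hs)) ht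
    linarith
  have hΦ_bot : Tendsto Φ atTop atBot :=
    tendsto_atBot_mono' _ (eventually_ge_atTop T |>.mono hΦ_le)
      (tendsto_atBot_add_const_left _ _ (tendsto_id.const_mul_atTop_of_neg (neg_lt_zero.2 hη)))
  have := (tendsto_exp_atBot.comp hΦ_bot).const_mul (f T)
  rw [mul_zero] at this
  exact this.congr' (eventually_ge_atTop T |>.mono fun t ht => (hf_eq t ht).symm)

end LinearODE

/-- `(a + d - b - c) u + (b - d)` is the payoff of the first strategy minus that of the second
when a fraction `u` of the population plays the first. -/
theorem mul_payoff_gap_le {a b c d u : ℝ} (hac : c ≤ a) (hdb : b ≤ d) (hu₀ : 0 ≤ u)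
    (hu₁ : u ≤ 1) : u * ((a + d - b - c) * u + (b - d)) ≤ a - c := by
  have key : a - c - u * ((a + d - b - c) * u + (b - d)) =
      (1 - u) * ((a + d - b - c) * u + (a - c)) := by ring
  have : 0 ≤ (1 - u) * ((a + d - b - c) * u + (a - c)) :=
    mul_nonneg (by linarith) (by nlinarith)
  linarith

namespace IsConformitySolution

variable {a b c d : ℝ} {φ x g : ℝ → ℝ}

theorem continuousOn_x (hsol : IsConformitySolution a b c d φ x g) : ContinuousOn x (Ici 0) :=
  fun t ht => (hsol t ht).1.continuousAt.continuousWithinAt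

theorem continuousOn_g (hsol : IsConformitySolution a b c d φ x g) : ContinuousOn g (Ici 0) :=
  fun t ht => (hsol t ht).2.continuousAt.continuousWithinAt

theorem g_pos (hsol : IsConformitySolution a b c d φ x g) (hφ : Continuous φ) (hg₀ : 0 < g 0)
    {t : ℝ} (ht : 0 ≤ t) : 0 < g t := by
  obtain ⟨_, -, hg_eq⟩ := exists_eq_mul_exp_of_hasDerivAt_mul
    (hφ.comp_continuousOn hsol.continuousOn_x) fun s hs => (hsol s hs).2
  rw [hg_eq t ht]
  positivity

theorem x_nonneg (hsol : IsConformitySolution a b c d φ x g) (hx₀ : 0 ≤ x 0) {t : ℝ}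
    (ht : 0 ≤ t) : 0 ≤ x t := by
  have hx := hsol.continuousOn_x
  have hg := hsol.continuousOn_g
  obtain ⟨_, -, hx_eq⟩ := exists_eq_mul_exp_of_hasDerivAt_mul
    (k := fun s => (1 - x s) * ((a + d - b - c) * x s + (b - d) - g s * (1 - x s)))
    (by fun_prop) fun s hs => (hsol s hs).1.congr_deriv (by ring)
  rw [hx_eq t ht]
  positivity

theorem x_lt_one (hsol : IsConformitySolution a b c d φ x g) (hx₀ : x 0 < 1) {t : ℝ}
    (ht : 0 ≤ t) : x t < 1 := by
  have hx := hsol.continuousOn_x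
  have hg := hsol.continuousOn_g
  obtain ⟨_, -, hx_eq⟩ := exists_eq_mul_exp_of_hasDerivAt_mul (f := fun s => 1 - x s)
    (k := fun s => -x s * ((a + d - b - c) * x s + (b - d) - g s * (1 - x s)))
    (by fun_prop) fun s hs => ((hsol s hs).1.const_sub 1).congr_deriv (by ring)
  have : 0 < 1 - x t := by
    rw [hx_eq t ht]
    exact mul_pos (sub_pos.2 hx₀) (exp_pos _)
  linarith

theorem hasDerivAt_log_g (hsol : IsConformitySolution a b c d φ x g) {t : ℝ} (ht : 0 ≤ t)
    (hg : 0 < g t) : HasDerivAt (fun s => log (g s)) (φ (x t)) t :=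
  ((hsol t ht).2.log hg.ne').congr_deriv (by field_simp)

theorem hasDerivAt_log_one_sub_x (hsol : IsConformitySolution a b c d φ x g) {t : ℝ}
    (ht : 0 ≤ t) (hx : x t < 1) :
    HasDerivAt (fun s => log (1 - x s))
      (-x t * ((a + d - b - c) * x t + (b - d) - g t * (1 - x t))) t := by
  have hx' : 1 - x t ≠ 0 := (sub_pos.2 hx).ne'
  exact (((hsol t ht).1.const_sub 1).log hx').congr_deriv (by field_simp)

theorem exists_add_mul_le_log_g_add_log_one_sub_x (hsol : IsConformitySolution a b c d φ x g)
    (hac : c ≤ a) (hdb : b ≤ d) {μ ε : ℝ} (hε : 0 < ε)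
    (hg : ∀ t, 0 ≤ t → 0 < g t) (hx₀ : ∀ t, 0 ≤ t → 0 ≤ x t) (hx₁ : ∀ t, 0 ≤ t → x t < 1)
    (hφμ : ∀ t, 0 ≤ t → μ ≤ φ (x t)) (hφε : ∀ t, 0 ≤ t → 1 - ε ≤ x t → a - c + μ < φ (x t)) :
    ∃ β, ∀ t, 0 ≤ t → β + μ * t ≤ log (g t) + log (1 - x t) := by
  obtain ⟨β, hβ₀, hβε⟩ : ∃ β, β ≤ log (g 0) + log (1 - x 0) ∧ β + 1 ≤ log (g 0) + log ε :=
    ⟨min (log (g 0) + log (1 - x 0)) (log (g 0) + log ε) - 1,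
      (sub_le_self _ zero_le_one).trans (min_le_left _ _),
      (sub_add_cancel _ _).trans_le (min_le_right _ _)⟩
  have hlog_g : ∀ t, 0 ≤ t → log (g 0) + μ * t ≤ log (g t) := fun t ht => by
    have := mul_sub_le_sub_of_le_hasDerivAt (fun s hs => hsol.hasDerivAt_log_g hs (hg s hs))
      hφμ ht
    linarith
  refine ⟨β, fun t ht => ?_⟩
  refine image_le_of_deriv_right_lt_deriv_boundary' (f := fun s => β + μ * s) (f' := fun _ => μ)
    (a := 0) (b := t) (fun s _ => by fun_prop)
    (fun s _ => (((hasDerivAt_id s).const_mul μ).const_add β).hasDerivWithinAt.congr_deriv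
      (by ring))
    (by simpa using hβ₀) (B := fun s => log (g s) + log (1 - x s))
    (fun s hs => ((hsol.hasDerivAt_log_g hs.1 (hg s hs.1)).add
      (hsol.hasDerivAt_log_one_sub_x hs.1 (hx₁ s hs.1))).continuousAt.continuousWithinAt)
    (fun s hs => ((hsol.hasDerivAt_log_g hs.1 (hg s hs.1)).add
      (hsol.hasDerivAt_log_one_sub_x hs.1 (hx₁ s hs.1))).hasDerivWithinAt)
    (fun s hs hβs => ?_) ⟨ht, le_rfl⟩
  by_cases hxs : 1 - ε ≤ x s
  · have := mul_payoff_gap_le hac hdb (hx₀ s hs.1) (hx₁ s hs.1).le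
    have := hφε s hs.1 hxs
    nlinarith [mul_nonneg (hx₀ s hs.1) (mul_pos (hg s hs.1) (sub_pos.2 (hx₁ s hs.1))).le]
  · have : log ε < log (1 - x s) := log_lt_log hε (by linarith)
    have := hlog_g s hs.1
    linarith

theorem exists_lt_threshold (hsol : IsConformitySolution a b c d φ x g) (hac : c < a)
    (hdb : b < d) (hφ : Continuous φ) (hφpos : ∀ y, (d - b) / (a + d - b - c) ≤ y → y ≤ 1 → 0 < φ y)
    (hφ₁ : ∃ ε, 0 < ε ∧ ∀ y, 1 - ε ≤ y → y ≤ 1 → a - c < φ y)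
    (hg : ∀ t, 0 ≤ t → 0 < g t) (hx₁ : ∀ t, 0 ≤ t → x t < 1) :
    ∃ T, 0 ≤ T ∧ x T < (d - b) / (a + d - b - c) := by
  set xs := (d - b) / (a + d - b - c)
  have hxs : 0 < xs := div_pos (by linarith) (by linarith)
  by_contra! hge
  have hx₀ : ∀ t, 0 ≤ t → 0 ≤ x t := fun t ht => hxs.le.trans (hge t ht)
  obtain ⟨ε, hε, hφε⟩ := hφ₁
  obtain ⟨y₀, hy₀, hy₀_min⟩ := isCompact_Icc.exists_isMinOn
    (nonempty_Icc.2 ((hge 0 le_rfl).trans (hx₁ 0 le_rfl).le)) hφ.continuousOn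
  obtain ⟨y₁, hy₁, hy₁_min⟩ := isCompact_Icc.exists_isMinOn
    (nonempty_Icc.2 (by linarith : 1 - ε ≤ 1)) hφ.continuousOn
  set μ := min (φ y₀) ((φ y₁ - (a - c)) / 2)
  have hμ : 0 < μ := lt_min (hφpos y₀ hy₀.1 hy₀.2) (by linarith [hφε y₁ hy₁.1 hy₁.2])
  obtain ⟨β, hβ⟩ := hsol.exists_add_mul_le_log_g_add_log_one_sub_x hac.le hdb.le hε hg hx₀ hx₁
    (μ := μ) (fun t ht => (min_le_left _ _).trans (hy₀_min ⟨hge t ht, (hx₁ t ht).le⟩))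
    (fun t ht hxt => by
      have : φ y₁ ≤ φ (x t) := hy₁_min ⟨hxt, (hx₁ t ht).le⟩
      linarith [min_le_right (φ y₀) ((φ y₁ - (a - c)) / 2), hφε y₁ hy₁.1 hy₁.2])
  set K := (a - c + 1) / xs
  have hK : 0 < K := div_pos (by linarith) hxs
  have hZ : Tendsto (fun t => log (g t) + log (1 - x t)) atTop atTop :=
    tendsto_atTop_mono' _ (eventually_ge_atTop 0 |>.mono hβ)
      (tendsto_atTop_add_const_left _ _ (tendsto_id.const_mul_atTop hμ))
  obtain ⟨T, hT⟩ := eventually_atTop.1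
    ((hZ.eventually_ge_atTop (log K)).and (eventually_ge_atTop 0))
  have hT₀ : 0 ≤ T := (hT T le_rfl).2
  have hrate : ∀ t ∈ Ici T,
      1 ≤ -x t * ((a + d - b - c) * x t + (b - d) - g t * (1 - x t)) := fun t ht => by
      obtain ⟨hZt, ht₀⟩ := hT t ht
      have hy : K ≤ g t * (1 - x t) := by
        rwa [← log_mul (hg t ht₀).ne' (sub_pos.2 (hx₁ t ht₀)).ne', log_le_log_iff hK
          (mul_pos (hg t ht₀) (sub_pos.2 (hx₁ t ht₀)))] at hZt
      have := mul_payoff_gap_le hac.le hdb.le (hx₀ t ht₀) (hx₁ t ht₀).le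
      have : xs * K = a - c + 1 := mul_div_cancel₀ _ hxs.ne'
      nlinarith [mul_le_mul (hge t ht₀) hy hK.le (hx₀ t ht₀)]
  have hlog_nonpos : ∀ t, 0 ≤ t → log (1 - x t) ≤ 0 := fun t ht =>
    log_nonpos (sub_nonneg.2 (hx₁ t ht).le) (by linarith [hx₀ t ht])
  have hgrowth := mul_sub_le_sub_of_le_hasDerivAt (f := fun s => log (1 - x s))
    (fun s hs => hsol.hasDerivAt_log_one_sub_x (hT₀.trans hs) (hx₁ s (hT₀.trans hs)))
    hrate (t := T + 1 - log (1 - x T)) (by linarith [hlog_nonpos T hT₀])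
  linarith [hlog_nonpos (T + 1 - log (1 - x T)) (by linarith [hlog_nonpos T hT₀])]

theorem tendsto_x_zero (hsol : IsConformitySolution a b c d φ x g) (hac : c < a) (hdb : b < d)
    (hg : ∀ t, 0 ≤ t → 0 < g t) (hx₀ : ∀ t, 0 ≤ t → 0 ≤ x t) {T : ℝ} (hT : 0 ≤ T)
    (hxT : x T < (d - b) / (a + d - b - c)) : Tendsto x atTop (𝓝 0) := by
  have hA : 0 < a + d - b - c := by linarith
  have hxs : (d - b) / (a + d - b - c) < 1 := (div_lt_one hA).2 (by linarith)
  obtain ⟨v, hxTv, hvxs⟩ := exists_between hxT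
  have hv₀ : 0 < v := (hx₀ T hT).trans_lt hxTv
  have hv₁ : 0 < 1 - v := by linarith
  have hFv : (a + d - b - c) * v + (b - d) < 0 := by
    have : (a + d - b - c) * v < d - b := (lt_div_iff₀' hA).1 (by linarith)
    linarith
  have hx_le : ∀ t ∈ Ici T, x t ≤ v := fun t ht =>
    image_le_of_deriv_right_lt_deriv_boundary (B := fun _ => v) (B' := fun _ => 0)
      (fun s hs => (hsol s (hT.trans hs.1)).1.continuousAt.continuousWithinAt)
      (fun s hs => (hsol s (hT.trans hs.1)).1.hasDerivWithinAt) (by linarith)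
      (fun _ => hasDerivAt_const _ _)
      (fun s hs hxsv => by
        rw [hxsv]
        exact mul_neg_of_pos_of_neg (mul_pos hv₀ hv₁)
          (by nlinarith [hg s (hT.trans hs.1)]))
      ⟨ht, le_rfl⟩
  have hk : ContinuousOn
      (fun s => (1 - x s) * ((a + d - b - c) * x s + (b - d) - g s * (1 - x s))) (Ici T) := by
    have := hsol.continuousOn_x.mono (Ici_subset_Ici.2 hT)
    have := hsol.continuousOn_g.mono (Ici_subset_Ici.2 hT)
    fun_prop
  refine tendsto_zero_of_hasDerivAt_mul_of_le_neg
    (η := -((1 - v) * ((a + d - b - c) * v + (b - d))))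
    (neg_pos.2 (mul_neg_of_pos_of_neg hv₁ hFv)) hk
    (fun s hs => (hsol s (hT.trans hs)).1.congr_deriv (by ring)) fun t ht => ?_
  have hxt := hx_le t ht
  have hgt := hg t (hT.trans ht)
  nlinarith [mul_le_mul_of_nonneg_left hxt hA.le, sq_nonneg (1 - x t)]

theorem tendsto_g_zero (hsol : IsConformitySolution a b c d φ x g) (hφ : Continuous φ) {δ : ℝ}
    (hδ : 0 < δ) (hφneg : ∀ y, 0 ≤ y → y < δ → φ y < 0) (hx₀ : ∀ t, 0 ≤ t → 0 ≤ x t)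
    (hx : Tendsto x atTop (𝓝 0)) : Tendsto g atTop (𝓝 0) := by
  obtain ⟨y, hy, hy_max⟩ := isCompact_Icc.exists_isMaxOn
    (nonempty_Icc.2 (half_pos hδ).le) hφ.continuousOn
  obtain ⟨T, hT⟩ := eventually_atTop.1
    ((hx.eventually (ge_mem_nhds (half_pos hδ))).and (eventually_ge_atTop 0))
  have hT₀ : 0 ≤ T := (hT T le_rfl).2
  refine tendsto_zero_of_hasDerivAt_mul_of_le_neg (η := -φ y)
    (neg_pos.2 (hφneg y hy.1 (by linarith [hy.2])))
    ((hφ.comp_continuousOn hsol.continuousOn_x).mono (Ici_subset_Ici.2 hT₀))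
    (fun t ht => (hsol t (hT t ht).2).2) fun t ht => ?_
  rw [neg_neg]
  exact hy_max ⟨hx₀ t (hT t ht).2, (hT t ht).1⟩

end IsConformitySolution

/-- Consensus reaching via the conformity-gain controller in a coordination game. -/
theorem consensus_reaching_conformity (a b c d δ : ℝ) (hac : a > c) (hdb : d > b)
    (hδ0 : 0 < δ) (hδ : δ < (d - b) / (a + d - b - c))
    (φ : ℝ → ℝ) (hφ : ContDiff ℝ 1 φ)
    (h1 : ∀ y : ℝ, 0 ≤ y → y < δ → φ y < 0)
    (h2 : ∀ y : ℝ, δ < y → y ≤ 1 → 0 < φ y)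
    (h3 : ∃ ε : ℝ, 0 < ε ∧ ∀ y : ℝ, 1 - ε ≤ y → y ≤ 1 → a - c < φ y)
    (x g : ℝ → ℝ) (hsol : IsConformitySolution a b c d φ x g)
    (hx0 : x 0 ∈ Set.Ico (0 : ℝ) 1) (hg0 : 0 < g 0) :
    Filter.Tendsto x Filter.atTop (nhds 0) ∧
    Filter.Tendsto g Filter.atTop (nhds 0) := by
  have hφc : Continuous φ := hφ.continuous
  have hg : ∀ t, 0 ≤ t → 0 < g t := fun t => hsol.g_pos hφc hg0
  have hx₀ : ∀ t, 0 ≤ t → 0 ≤ x t := fun t => hsol.x_nonneg hx0.1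
  obtain ⟨T, hT, hxT⟩ := hsol.exists_lt_threshold hac hdb hφc
    (fun y hy => h2 y (hδ.trans_le hy)) h3 hg fun t => hsol.x_lt_one hx0.2
  have hx := hsol.tendsto_x_zero hac hdb hg hx₀ hT hxT
  exact ⟨hx, hsol.tendsto_g_zero hφc hδ0 h1 hx₀ hx⟩
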